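/- Let T be an observation table and (≡,f) a merging map on T of minimal size among all merging maps on T, and let M be the transducer resulting from (≡,f). Then M is compatible with T. -/

import Mathlib

attribute [local instance] Classical.propDecidable

/-- A subsequential string transducer with input alphabet `σ` and output alphabet `γ`. -/
structure Transducer (σ : Type) (γ : Type) : Type 1 where
  Q : Type
  fin : Finite Q
  q0 : Q
  w0 : List γ
  δ : Q → σ → Option (Q × List γ)
  δF : Q → Option (List γ)

namespace Transducer

variable {σ γ : Type}

/-- The run relation `q →*^{u|w} q'`, as a function: from state `q`, reading `u`,
we reach the returned state producing the returned (concatenated) output. -/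
def runFrom (M : Transducer σ γ) : M.Q → List σ → Option (M.Q × List γ)
  | q, [] => some (q, [])
  | q, a :: u =>
    (M.δ q a).bind fun x =>
      (M.runFrom x.1 u).map fun y => (y.1, x.2 ++ y.2)

/-- The semantics `⟦M⟧` of a transducer, as a partial function `Σ* → Γ*`. -/
def sem (M : Transducer σ γ) (u : List σ) : Option (List γ) :=
  (M.runFrom M.q0 u).bind fun x => (M.δF x.1).map fun w' => M.w0 ++ x.2 ++ w'

/-- The number of states `|M|` of a transducer. -/
noncomputable def size (M : Transducer σ γ) : ℕ := Nat.card M.Q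

/-- The run of `v` in `M` (from the initial state) uses the transition out of
state `q` reading letter `a`. -/
def usesTransition (M : Transducer σ γ) (q : M.Q) (a : σ) (v : List σ) : Prop :=
  ∃ (vp vs : List σ) (w : List γ), v = vp ++ a :: vs ∧ M.runFrom M.q0 vp = some (q, w)

/-- Modify the transition function of `M` at `(q, a)`: replace it by `o`
(`o = none` deletes the transition, `o = some (q', w)` makes it `q →^{a|w} q'`). -/
noncomputable def modifyDelta (M : Transducer σ γ) (q : M.Q) (a : σ)
    (o : Option (M.Q × List γ)) : Transducer σ γ :=
  { M with δ := fun p b => if p = q ∧ b = a then o else M.δ p b }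

/-- The product transducer `M × A` of a transducer and a DFA. -/
noncomputable def prodDFA {Q : Type} [Finite Q] (M : Transducer σ γ) (A : DFA σ Q) :
    Transducer σ γ where
  Q := M.Q × Q
  fin := by have := M.fin; infer_instance
  q0 := (M.q0, A.start)
  w0 := M.w0
  δ := fun qp a => (M.δ qp.1 a).map fun x => ((x.1, A.step qp.2 a), x.2)
  δF := fun qp => if qp.2 ∈ A.accept then M.δF qp.1 else none

end Transducer

/-- A table entry: a word of `Γ*`, the wildcard `#`, or `⊥`. -/
inductive TVal (γ : Type) : Type where
  | word : List γ → TVal γ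
  | hash : TVal γ
  | bot  : TVal γ

/-- An observation table for a target partial function `τ` with regular domain
upper bound `Up`, based on a finite prefix-closed set `P` and a finite
suffix-closed set `S` (both containing `ε`). -/
structure ObsTable (σ γ : Type) where
  P : Finset (List σ)
  S : Finset (List σ)
  eps_mem_P : ([] : List σ) ∈ P
  eps_mem_S : ([] : List σ) ∈ S
  prefixClosed : ∀ u ∈ P, ∀ v : List σ, v <+: u → v ∈ P
  suffixClosed : ∀ u ∈ S, ∀ v : List σ, v <:+ u → v ∈ S
  Up : Language σ
  regular : ∃ (n : ℕ) (A : DFA σ (Fin n)), A.accepts = Up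
  τ : List σ → Option (List γ)
  dom_subset : ∀ u : List σ, (τ u).isSome → u ∈ Up

namespace ObsTable

variable {σ γ : Type}

/-- The set `P ∪ PΣ`. -/
def rowIdx (T : ObsTable σ γ) : Set (List σ) :=
  ↑T.P ∪ {x | ∃ p ∈ T.P, ∃ a : σ, x = p ++ [a]}

/-- The set `(P ∪ PΣ)·S` on which the table is defined. -/
def rows (T : ObsTable σ γ) : Set (List σ) :=
  {x | ∃ u ∈ T.rowIdx, ∃ v ∈ T.S, x = u ++ v}

/-- The table entry at `x`: `#` if `x ∉ Up`, `⊥` if `x ∈ Up ∖ dom τ`, and `τ x` otherwise. -/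
noncomputable def val (T : ObsTable σ γ) (x : List σ) : TVal γ :=
  if x ∈ T.Up then
    match T.τ x with
    | some w => TVal.word w
    | none => TVal.bot
  else TVal.hash

/-- `P_T`: the set of prefixes of elements of `(P ∪ PΣ)·S`. -/
def PT (T : ObsTable σ γ) : Set (List σ) := {u | ∃ x ∈ T.rows, u <+: x}

/-- `P_Γ`: those `u ∈ P_T` having an extension whose table entry is a word of `Γ*`. -/
def PGamma (T : ObsTable σ γ) : Set (List σ) :=
  {u | u ∈ T.PT ∧ ∃ v : List σ, u ++ v ∈ T.rows ∧ ∃ w, T.val (u ++ v) = TVal.word w}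

/-- A transducer `M` is compatible with the table `T`. -/
def Compatible (T : ObsTable σ γ) (M : Transducer σ γ) : Prop :=
  ∀ x ∈ T.rows,
    (∀ w, T.val x = TVal.word w → M.sem x = some w) ∧
    (T.val x = TVal.bot → M.sem x = none)

lemma rowIdx_finite [Finite σ] (T : ObsTable σ γ) : T.rowIdx.Finite := by
  refine Set.Finite.union T.P.finite_toSet ?_
  have h : {x : List σ | ∃ p ∈ T.P, ∃ a : σ, x = p ++ [a]}
      ⊆ (fun pa : List σ × σ => pa.1 ++ [pa.2]) '' ((↑T.P : Set (List σ)) ×ˢ (Set.univ : Set σ)) := by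
    rintro x ⟨p, hp, a, rfl⟩
    exact ⟨(p, a), ⟨hp, trivial⟩, rfl⟩
  exact ((T.P.finite_toSet.prod Set.finite_univ).image _).subset h

lemma rows_finite [Finite σ] (T : ObsTable σ γ) : T.rows.Finite := by
  have h : T.rows ⊆ (fun uv : List σ × List σ => uv.1 ++ uv.2) '' (T.rowIdx ×ˢ (↑T.S : Set (List σ))) := by
    rintro x ⟨u, hu, v, hv, rfl⟩
    exact ⟨(u, v), ⟨hu, hv⟩, rfl⟩
  exact (((rowIdx_finite T).prod T.S.finite_toSet).image _).subset h

lemma PT_finite [Finite σ] (T : ObsTable σ γ) : T.PT.Finite := by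
  have h : T.PT ⊆ ⋃ x ∈ T.rows, {u : List σ | u ∈ x.inits} := by
    rintro u ⟨x, hx, hpre⟩
    exact Set.mem_biUnion hx (by simpa [List.mem_inits] using hpre)
  refine (Set.Finite.biUnion (rows_finite T) fun x _ => ?_).subset h
  exact x.inits.finite_toSet

end ObsTable

/-- A merging map `(≡, f)` on an observation table `T`. -/
structure MergingMap {σ γ : Type} (T : ObsTable σ γ) where
  rel : List σ → List σ → Prop
  f : List σ → Option (List γ)
  rel_mem : ∀ u v : List σ, rel u v → u ∈ T.PT ∧ v ∈ T.PT
  rel_refl : ∀ u ∈ T.PT, rel u u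
  rel_symm : ∀ {u v : List σ}, rel u v → rel v u
  rel_trans : ∀ {u v w : List σ}, rel u v → rel v w → rel u w
  f_mem : ∀ u : List σ, (f u).isSome → u ∈ T.PT
  cond1 : ∀ u v : List σ, f u = none → rel u v → f v = none
  cond2 : ∀ (u v : List σ) (w : List γ), u ∈ T.PT → u ++ v ∈ T.rows →
    T.val (u ++ v) = TVal.word w → ∃ x, f u = some x ∧ x <+: w
  cond3 : ∀ (u : List σ) (a : σ) (w : List γ), f (u ++ [a]) = some w →
    ∃ x, f u = some x ∧ x <+: w
  cond4 : ∀ (u u' : List σ) (a : σ) (wu : List γ), f u = some wu → rel u u' →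
    u ++ [a] ∈ T.PT → u' ++ [a] ∈ T.PT →
    rel (u ++ [a]) (u' ++ [a]) ∧
    ∀ wua, f (u ++ [a]) = some wua →
      ∃ (wu' x : List γ), f u' = some wu' ∧ wua = wu ++ x ∧ f (u' ++ [a]) = some (wu' ++ x)
  cond5 : ∀ (u u' : List σ) (w : List γ), u ∈ T.rows → T.val u = TVal.word w → rel u u' →
    (u' ∈ T.rows → T.val u' ≠ TVal.bot) ∧
    ∀ w', u' ∈ T.rows → T.val u' = TVal.word w' →
      ∃ (x fu fu' : List γ), f u = some fu ∧ f u' = some fu' ∧ w = fu ++ x ∧ w' = fu' ++ x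
  cond6 : ∀ (u : List σ) (a : σ), (f (u ++ [a])).isSome →
    (¬ ∃ v, rel u v ∧ v ++ [a] ∈ T.PGamma) → f (u ++ [a]) = f u

namespace MergingMap

variable {σ γ : Type} {T : ObsTable σ γ}

/-- The `≡`-class of `u`. -/
def cls (m : MergingMap T) (u : List σ) : Set (List σ) := {v | m.rel u v}

/-- The set of `≡`-classes meeting `dom f`. -/
def classes (m : MergingMap T) : Set (Set (List σ)) :=
  {C | ∃ u : List σ, (m.f u).isSome ∧ C = m.cls u}

/-- The size of a merging map: the number of `≡`-classes meeting `dom f`. -/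
noncomputable def size (m : MergingMap T) : ℕ := m.classes.ncard

lemma cls_mem_classes (m : MergingMap T) {u : List σ} (h : (m.f u).isSome) :
    m.cls u ∈ m.classes := ⟨u, h, rfl⟩

lemma classes_finite [Finite σ] (m : MergingMap T) : m.classes.Finite := by
  have h : m.classes ⊆ m.cls '' T.PT := by
    rintro C ⟨u, hu, rfl⟩
    exact ⟨u, m.f_mem u hu, rfl⟩
  exact ((T.PT_finite).image _).subset h

/-- A muted pair `(u, a)` of a merging map. -/
def Muted (m : MergingMap T) (u : List σ) (a : σ) : Prop :=
  (m.f u).isSome ∧ (m.f (u ++ [a])).isSome ∧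
    ¬ ∃ v, m.rel u v ∧ v ++ [a] ∈ T.PGamma

/-- An open end `(u, a)` of a merging map. -/
def OpenEnd (m : MergingMap T) (u : List σ) (a : σ) : Prop :=
  u ∈ T.PT ∧ ¬ ∃ v, m.rel u v ∧ v ++ [a] ∈ T.PT

/-- The transducer resulting from a merging map (assuming `f ε` is defined,
so that the initial state exists). -/
noncomputable def resulting [Finite σ] (m : MergingMap T) (h0 : (m.f []).isSome) :
    Transducer σ γ where
  Q := {C : Set (List σ) // C ∈ m.classes}
  fin := m.classes_finite.to_subtype
  q0 := ⟨m.cls [], m.cls_mem_classes h0⟩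
  w0 := (m.f []).get h0
  δ := fun q a =>
    if h : ∃ u : List σ, (m.f u).isSome ∧ (m.f (u ++ [a])).isSome ∧ q.1 = m.cls u then
      some (⟨m.cls (h.choose ++ [a]), m.cls_mem_classes h.choose_spec.2.1⟩,
        ((m.f (h.choose ++ [a])).get h.choose_spec.2.1).drop
          ((m.f h.choose).get h.choose_spec.1).length)
    else none
  δF := fun q =>
    if h : ∃ u : List σ, (m.f u).isSome ∧ q.1 = m.cls u ∧ u ∈ T.rows ∧
        ∃ w, T.val u = TVal.word w then
      some (h.choose_spec.2.2.2.choose.drop ((m.f h.choose).get h.choose_spec.1).length)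
    else none

/-- The state `q_u` of the resulting transducer associated with `u ∈ dom f`. -/
noncomputable def state [Finite σ] (m : MergingMap T) (h0 : (m.f []).isSome)
    {u : List σ} (h : (m.f u).isSome) : (m.resulting h0).Q :=
  ⟨m.cls u, m.cls_mem_classes h⟩

/-- An open completion of a merging map, determined by a choice `g` of added
transitions (which, when used, must only be added at open ends, with output `ε`). -/
noncomputable def openCompletion [Finite σ] (m : MergingMap T) (h0 : (m.f []).isSome)
    (g : (m.resulting h0).Q → σ → Option ((m.resulting h0).Q)) : Transducer σ γ :=
  { m.resulting h0 with
    δ := fun q a =>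
      match (m.resulting h0).δ q a with
      | some x => some x
      | none => (g q a).map fun q' => (q', ([] : List γ)) }

/-- The choice `g` of added transitions only adds transitions at open ends. -/
def ValidOpenChoice [Finite σ] (m : MergingMap T) (h0 : (m.f []).isSome)
    (g : (m.resulting h0).Q → σ → Option ((m.resulting h0).Q)) : Prop :=
  ∀ (q : (m.resulting h0).Q) (a : σ), (g q a).isSome →
    ∃ u : List σ, q.1 = m.cls u ∧ m.OpenEnd u a

/-- The run of `x` in the open completion uses a muted or an open transition. -/
def usesMutedOrOpen [Finite σ] (m : MergingMap T) (h0 : (m.f []).isSome)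
    (g : (m.resulting h0).Q → σ → Option ((m.resulting h0).Q)) (x : List σ) : Prop :=
  ∃ (vp : List σ) (a : σ) (vs : List σ) (q : (m.resulting h0).Q) (w : List γ),
    x = vp ++ a :: vs ∧
    (m.openCompletion h0 g).runFrom (m.openCompletion h0 g).q0 vp = some (q, w) ∧
    ((∃ u, q.1 = m.cls u ∧ m.Muted u a) ∨ (m.resulting h0).δ q a = none)

end MergingMap

/-- The equivalence on `P_T` induced by a transducer: two words are related when
they reach the same state of `M` (or both fail to have a run). -/
def inducedRel {σ γ : Type} (M : Transducer σ γ) (T : ObsTable σ γ) (u v : List σ) : Prop :=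
  u ∈ T.PT ∧ v ∈ T.PT ∧
    (M.runFrom M.q0 u).map Prod.fst = (M.runFrom M.q0 v).map Prod.fst

/-- Helper for the induced partial output function: walk through the word,
appending the transition output only when the step leads into `P_Γ` for
some equivalent word. -/
noncomputable def goF {σ γ : Type} (M : Transducer σ γ) (T : ObsTable σ γ) :
    M.Q → List γ → List σ → Option (List γ)
  | _, acc, [] => some acc
  | q, acc, a :: rest =>
    (M.δ q a).bind fun x =>
      goF M T x.1
        (if ∃ v ∈ T.PT, (M.runFrom M.q0 v).map Prod.fst = some q ∧ v ++ [a] ∈ T.PGamma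
          then acc ++ x.2 else acc) rest

/-- The partial output function induced by a transducer on `P_T`. -/
noncomputable def inducedF {σ γ : Type} (M : Transducer σ γ) (T : ObsTable σ γ)
    (u : List σ) : Option (List γ) :=
  if u ∈ T.PT then goF M T M.q0 M.w0 u else none

/-!
By (3) and (4), reading `u ∈ dom f` leads the resulting transducer from `q_ε` to `q_u` with
output `f(ε)⁻¹f(u)`, whichever representatives the transitions were defined with; conversely,
by (4), a run along `u ∈ P_T` exists only if `f(u)` is defined. By (5) the final output of `q_u`
is `f(u)⁻¹T(u)` when `T(u) ∈ Γ*` and is undefined when `T(u) = ⊥`. Since (2) puts every `u`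
with `T(u) ∈ Γ*` into `dom f`, `⟦M⟧(u) = f(u) · f(u)⁻¹T(u) = T(u)` there, while `⟦M⟧(u)` is
undefined wherever `T(u) = ⊥`.
-/

namespace Transducer

variable {σ γ : Type}

lemma runFrom_append_singleton (M : Transducer σ γ) (q : M.Q) (u : List σ) (a : σ) :
    M.runFrom q (u ++ [a]) =
      (M.runFrom q u).bind fun x => (M.δ x.1 a).map fun y => (y.1, x.2 ++ y.2) := by
  induction u generalizing q with
  | nil => cases M.δ q a <;> simp [runFrom]
  | cons b u ih =>
    simp only [List.cons_append, runFrom, ih]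
    cases M.δ q b with
    | none => rfl
    | some x =>
      simp only [Option.bind_some]
      cases M.runFrom x.1 u with
      | none => rfl
      | some y => simp [Option.map_map, Function.comp_def]

end Transducer

namespace ObsTable

variable {σ γ : Type} (T : ObsTable σ γ)

lemma mem_PT_of_prefix {u v : List σ} (hu : u ∈ T.PT) (hv : v <+: u) : v ∈ T.PT :=
  let ⟨x, hx, hux⟩ := hu
  ⟨x, hx, hv.trans hux⟩

lemma mem_PT_of_mem_rows {u : List σ} (hu : u ∈ T.rows) : u ∈ T.PT :=
  ⟨u, hu, List.prefix_refl u⟩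

end ObsTable

namespace MergingMap

variable {σ γ : Type} {T : ObsTable σ γ} (m : MergingMap T)

lemma cls_eq_of_rel {u v : List σ} (h : m.rel u v) : m.cls u = m.cls v := by
  ext w
  exact ⟨m.rel_trans (m.rel_symm h), m.rel_trans h⟩

lemma rel_of_cls_eq {u v : List σ} (hv : v ∈ T.PT) (h : m.cls u = m.cls v) : m.rel u v := by
  have hvv : v ∈ m.cls v := m.rel_refl v hv
  rwa [← h] at hvv

lemma f_append_isSome_of_rel {u u' : List σ} {a : σ} (h : m.rel u u')
    (hua : (m.f (u ++ [a])).isSome) (hu'a : u' ++ [a] ∈ T.PT) :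
    (m.f (u' ++ [a])).isSome := by
  obtain ⟨wua, hwua⟩ := Option.isSome_iff_exists.mp hua
  obtain ⟨wu, hwu, -⟩ := m.cond3 u a wua hwua
  obtain ⟨-, hf⟩ := m.cond4 u u' a wu hwu h (m.f_mem _ hua) hu'a
  obtain ⟨_, _, -, -, hfu'a⟩ := hf wua hwua
  exact Option.isSome_of_eq_some hfu'a

lemma f_append_eq_of_rel {u u' : List σ} {a : σ} {x x' y : List γ} (h : m.rel u u')
    (hu : m.f u = some x) (hua : m.f (u ++ [a]) = some (x ++ y)) (hu' : m.f u' = some x')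
    (hu'a : u' ++ [a] ∈ T.PT) :
    m.f (u' ++ [a]) = some (x' ++ y) := by
  obtain ⟨-, hf⟩ := m.cond4 u u' a x hu h (m.f_mem _ (Option.isSome_of_eq_some hua)) hu'a
  obtain ⟨_, z, hu'', hyz, hfu'a⟩ := hf _ hua
  rw [hu', Option.some_inj] at hu''
  rwa [← hu'', ← List.append_cancel_left hyz] at hfu'a

section Resulting

variable [Finite σ] (h0 : (m.f []).isSome)

lemma resulting_δ_state {u : List σ} {a : σ} {x y : List γ} (hu : m.f u = some x)
    (hua : m.f (u ++ [a]) = some (x ++ y)) :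
    (m.resulting h0).δ (m.state h0 (Option.isSome_of_eq_some hu)) a =
      some (m.state h0 (Option.isSome_of_eq_some hua), y) := by
  have hex : ∃ u' : List σ, (m.f u').isSome ∧ (m.f (u' ++ [a])).isSome ∧ m.cls u = m.cls u' :=
    ⟨u, Option.isSome_of_eq_some hu, Option.isSome_of_eq_some hua, rfl⟩
  simp only [resulting, state, dif_pos hex, Option.some_inj]
  obtain ⟨hfu', hfu'a, hcls⟩ := hex.choose_spec
  have hrel : m.rel u hex.choose := m.rel_of_cls_eq (m.f_mem _ hfu') hcls
  have hu'a := m.f_append_eq_of_rel hrel hu hua (Option.some_get hfu').symm (m.f_mem _ hfu'a)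
  refine Prod.ext (Subtype.ext ?_) ?_
  · exact (m.cls_eq_of_rel
      (m.cond4 u _ a x hu hrel (m.f_mem _ (Option.isSome_of_eq_some hua)) (m.f_mem _ hfu'a)).1).symm
  · simp only [hu'a, Option.get_some, List.drop_left]

lemma f_append_isSome_of_δ_isSome {u : List σ} {a : σ} (hu : (m.f u).isSome)
    (hua : u ++ [a] ∈ T.PT) (hδ : ((m.resulting h0).δ (m.state h0 hu) a).isSome) :
    (m.f (u ++ [a])).isSome := by
  simp only [resulting, state] at hδ
  split_ifs at hδ with hex
  · obtain ⟨u', hfu', hfu'a, hcls⟩ := hex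
    exact m.f_append_isSome_of_rel (m.rel_symm (m.rel_of_cls_eq (m.f_mem _ hfu') hcls)) hfu'a hua
  · nomatch hδ

lemma runFrom_resulting {u : List σ} {w : List γ} (hu : m.f u = some w) :
    ∃ t, (m.resulting h0).runFrom (m.resulting h0).q0 u =
      some (m.state h0 (Option.isSome_of_eq_some hu), t) ∧ (m.resulting h0).w0 ++ t = w := by
  induction u using List.reverseRecOn generalizing w with
  | nil =>
    refine ⟨[], rfl, ?_⟩
    simp [resulting, hu]
  | append_singleton u a ih =>
    obtain ⟨x, hx, y, rfl⟩ := m.cond3 u a w hu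
    obtain ⟨t, hrun, ht⟩ := ih hx
    refine ⟨t ++ y, ?_, by rw [← List.append_assoc, ht]⟩
    rw [Transducer.runFrom_append_singleton, hrun, Option.bind_some,
      m.resulting_δ_state h0 hx hu, Option.map_some]

lemma f_isSome_of_runFrom_isSome {u : List σ} (hu : u ∈ T.PT)
    (hrun : ((m.resulting h0).runFrom (m.resulting h0).q0 u).isSome) : (m.f u).isSome := by
  induction u using List.reverseRecOn with
  | nil => exact h0
  | append_singleton u a ih =>
    rw [Transducer.runFrom_append_singleton] at hrun
    have hrun_u : ((m.resulting h0).runFrom (m.resulting h0).q0 u).isSome := by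
      cases h : (m.resulting h0).runFrom (m.resulting h0).q0 u
      · simp [h] at hrun
      · rfl
    have hfu := ih (T.mem_PT_of_prefix hu (List.prefix_append u [a])) hrun_u
    obtain ⟨x, hx⟩ := Option.isSome_iff_exists.mp hfu
    obtain ⟨t, hrun_x, -⟩ := m.runFrom_resulting h0 hx
    rw [hrun_x, Option.bind_some, Option.isSome_map] at hrun
    exact m.f_append_isSome_of_δ_isSome h0 hfu hu hrun

lemma resulting_δF_state_of_word {u : List σ} {x w : List γ} (hu : m.f u = some x)
    (hrow : u ∈ T.rows) (hw : T.val u = TVal.word w) :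
    ∃ y, (m.resulting h0).δF (m.state h0 (Option.isSome_of_eq_some hu)) = some y ∧ x ++ y = w := by
  have hex : ∃ u' : List σ, (m.f u').isSome ∧ m.cls u = m.cls u' ∧ u' ∈ T.rows ∧
      ∃ w', T.val u' = TVal.word w' :=
    ⟨u, Option.isSome_of_eq_some hu, rfl, hrow, w, hw⟩
  simp only [resulting, state, dif_pos hex]
  obtain ⟨hfu', hcls, hrow', hw'⟩ := hex.choose_spec
  have hrel : m.rel u hex.choose := m.rel_of_cls_eq (m.f_mem _ hfu') hcls
  obtain ⟨z, fu, fu', hfu, hfu'', rfl, hz⟩ :=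
    (m.cond5 u _ w hrow hw hrel).2 _ hrow' hw'.choose_spec
  rw [hu, Option.some_inj] at hfu
  refine ⟨z, ?_, by rw [hfu]⟩
  simp only [hz, hfu'', Option.get_some, List.drop_left]

lemma resulting_δF_state_of_bot {u : List σ} (hu : (m.f u).isSome) (hrow : u ∈ T.rows)
    (hbot : T.val u = TVal.bot) : (m.resulting h0).δF (m.state h0 hu) = none := by
  simp only [resulting, state]
  refine dif_neg ?_
  rintro ⟨u', -, hcls, hrow', w', hw'⟩
  have hrel : m.rel u' u := m.rel_symm (m.rel_of_cls_eq (T.mem_PT_of_mem_rows hrow') hcls)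
  exact (m.cond5 u' u w' hrow' hw' hrel).1 hrow hbot

lemma sem_resulting_of_f_eq_some {u : List σ} {x : List γ} (hu : m.f u = some x) :
    (m.resulting h0).sem u =
      ((m.resulting h0).δF (m.state h0 (Option.isSome_of_eq_some hu))).map (x ++ ·) := by
  obtain ⟨t, hrun, rfl⟩ := m.runFrom_resulting h0 hu
  rw [Transducer.sem, hrun, Option.bind_some]

lemma sem_resulting_of_f_eq_none {u : List σ} (hu : u ∈ T.PT) (hf : m.f u = none) :
    (m.resulting h0).sem u = none := by
  cases hrun : (m.resulting h0).runFrom (m.resulting h0).q0 u with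
  | none => rw [Transducer.sem, hrun, Option.bind_none]
  | some p =>
    have := m.f_isSome_of_runFrom_isSome h0 hu (by rw [hrun]; rfl)
    simp [hf] at this

end Resulting

end MergingMap

theorem resulting_compatible_of_minimal_general {σ γ : Type} [Finite σ]
    (T : ObsTable σ γ) (m : MergingMap T)
    (h0 : (m.f []).isSome) :
    T.Compatible (m.resulting h0) := by
  intro x hx
  have hxPT := T.mem_PT_of_mem_rows hx
  refine ⟨fun w hw => ?_, fun hbot => ?_⟩
  · obtain ⟨fx, hfx, -⟩ := m.cond2 x [] w hxPT (by simpa using hx) (by simpa using hw)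
    obtain ⟨y, hδF, rfl⟩ := m.resulting_δF_state_of_word h0 hfx hx hw
    rw [m.sem_resulting_of_f_eq_some h0 hfx, hδF, Option.map_some]
  · cases hfx : m.f x with
    | none => exact m.sem_resulting_of_f_eq_none h0 hxPT hfx
    | some fx =>
      rw [m.sem_resulting_of_f_eq_some h0 hfx, m.resulting_δF_state_of_bot h0 _ hx hbot,
        Option.map_none]

/-- The transducer resulting from a merging map of minimal size is
compatible with the table. -/
theorem resulting_compatible_of_minimal {σ γ : Type} [Finite σ] [Finite γ]
    (T : ObsTable σ γ) (m : MergingMap T)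
    (hmin : ∀ m' : MergingMap T, m.size ≤ m'.size)
    (h0 : (m.f []).isSome) :
    T.Compatible (m.resulting h0) :=
  resulting_compatible_of_minimal_general T m h0
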